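/- Let n₁, n₂, m₁, m₂, d₁, d₂ be real numbers and define, for r_a, r_b > 0, α(r_a, r_b) = r_a² n₁ − 2 d₁ r_a r_b + r_b² m₁ and β(r_a, r_b) = n₂ r_a⁻² − 2 d₂ (r_a r_b)⁻¹ + m₂ r_b⁻². Then the three conditions α(1,1) = β(1,1), ∂(α+β)/∂r_a (1,1) = 0 and ∂(α+β)/∂r_b (1,1) = 0 hold simultaneously if and only if n₁ − n₂ = m₁ − m₂ = d₁ − d₂. -/

import Mathlib

/-! Each slice of `α + β` through `(1, 1)` has the shape
`x² a − 2 b x + p x⁻² − 2 q x⁻¹ + const`, whose derivative at `1` is `2 (a − b) − 2 (p − q)`.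
So the three conditions form a linear system in the differences `n₁ − n₂`, `m₁ − m₂`, `d₁ − d₂`,
equivalent to the two equations of standard form III. -/

theorem hasDerivAt_sq_mul_sub_add_inv (a b p q c : ℝ) {x : ℝ} (hx : x ≠ 0) :
    HasDerivAt (fun x : ℝ => x ^ 2 * a - 2 * b * x + p * (x ^ 2)⁻¹ - 2 * q * x⁻¹ + c)
      (2 * x * a - 2 * b - 2 * p * (x ^ 3)⁻¹ + 2 * q * (x ^ 2)⁻¹) x := by
  have hsq : HasDerivAt (fun x : ℝ => x ^ 2) (2 * x) x := by
    simpa using hasDerivAt_pow 2 x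
  have hsq_inv : HasDerivAt (fun x : ℝ => (x ^ 2)⁻¹) (-(2 * x) / (x ^ 2) ^ 2) x :=
    hsq.fun_inv (pow_ne_zero 2 hx)
  refine ((((hsq.mul_const a).sub ((hasDerivAt_id' x).const_mul (2 * b))).add
    (hsq_inv.const_mul p)).sub ((hasDerivAt_inv hx).const_mul (2 * q))).add_const c
    |>.congr_deriv ?_
  field_simp
  ring

theorem deriv_one_sq_mul_sub_add_inv (a b p q c : ℝ) :
    deriv (fun x : ℝ => x ^ 2 * a - 2 * b * x + p * (x ^ 2)⁻¹ - 2 * q * x⁻¹ + c) 1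
      = 2 * (a - b) - 2 * (p - q) := by
  rw [(hasDerivAt_sq_mul_sub_add_inv a b p q c one_ne_zero).deriv]
  ring

theorem identity_optimal_iff_standard_form_III (n₁ n₂ m₁ m₂ d₁ d₂ : ℝ) :
    (let α : ℝ → ℝ → ℝ := fun ra rb => ra ^ 2 * n₁ - 2 * d₁ * ra * rb + rb ^ 2 * m₁
     let β : ℝ → ℝ → ℝ := fun ra rb => n₂ * (ra ^ 2)⁻¹ - 2 * d₂ * (ra * rb)⁻¹ + m₂ * (rb ^ 2)⁻¹
     α 1 1 = β 1 1 ∧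
       deriv (fun ra => α ra 1 + β ra 1) 1 = 0 ∧
       deriv (fun rb => α 1 rb + β 1 rb) 1 = 0) ↔
    (n₁ - n₂ = m₁ - m₂ ∧ m₁ - m₂ = d₁ - d₂) := by
  have deriv_ra : deriv (fun ra : ℝ => ra ^ 2 * n₁ - 2 * d₁ * ra * 1 + 1 ^ 2 * m₁ +
      (n₂ * (ra ^ 2)⁻¹ - 2 * d₂ * (ra * 1)⁻¹ + m₂ * (1 ^ 2)⁻¹)) 1
      = 2 * (n₁ - d₁) - 2 * (n₂ - d₂) := by
    rw [← deriv_one_sq_mul_sub_add_inv n₁ d₁ n₂ d₂ (m₁ + m₂)]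
    congr 1; ext ra; simp only [mul_one, one_pow, inv_one]; ring
  have deriv_rb : deriv (fun rb : ℝ => 1 ^ 2 * n₁ - 2 * d₁ * 1 * rb + rb ^ 2 * m₁ +
      (n₂ * (1 ^ 2)⁻¹ - 2 * d₂ * (1 * rb)⁻¹ + m₂ * (rb ^ 2)⁻¹)) 1
      = 2 * (m₁ - d₁) - 2 * (m₂ - d₂) := by
    rw [← deriv_one_sq_mul_sub_add_inv m₁ d₁ m₂ d₂ (n₁ + n₂)]
    congr 1; ext rb; simp only [mul_one, one_mul, one_pow, inv_one]; ring
  dsimp only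
  rw [deriv_ra, deriv_rb]
  constructor
  · rintro ⟨_, _, _⟩
    constructor <;> linarith
  · rintro ⟨_, _⟩
    exact ⟨by linarith, by linarith, by linarith⟩
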